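/- arXiv:2204.02836 — 5 statements merged into one kernel-verified Lean document; each statement's English description precedes it below -/
import Mathlib

section
/- Let K be a field, f ∈ K[x] monic separable of degree n with distinct roots α_1, …, α_n in a splitting field N. Let F(z, u) = ∏_{σ ∈ S_n}(z − Σ_i α_{σ(i)} u_i) ∈ K[z, u_1, …, u_n], and let F_1 be an irreducible factor of F in K[z, u_1, …, u_n] divisible (over N) by z − Σ_i α_i u_i. Then a permutation τ ∈ S_n lies in the Galois group of f over K (acting on the indexed roots) if and only if z − Σ_i α_{τ(i)} u_i divides F_1 over N. -/
/-!
Over the fraction fields `K(u) ⊆ N(u)`, Gauss's lemma keeps `F₁` irreducible, so every linear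
form `Σ α_{τ i} uᵢ` that is a root of `F₁` is a `K(u)`-conjugate of `θ = Σ αᵢ uᵢ`. Since `N(u)`
is generated over `K(u)` by the normal extension `N/K`, it is normal over `K(u)`, so that
conjugate is `φ θ` for a `K(u)`-automorphism `φ` of `N(u)`. Such a `φ` fixes the `uᵢ` and
restricts to a `K`-automorphism `ψ` of `N`, and comparing coefficients in
`Σ ψ(αᵢ) uᵢ = φ θ = Σ α_{τ i} uᵢ` gives `ψ αᵢ = α_{τ i}`. Conversely, applying `ψ` to the
coefficients of a factorisation of `F₁` turns the factor `z - θ` into `z - Σ ψ(αᵢ) uᵢ`.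
-/
open Polynomial

namespace MvPolynomial

variable {R S σ : Type*} [CommSemiring R] [CommSemiring S] [Fintype σ]

noncomputable def linearForm (a : σ → R) : MvPolynomial σ R :=
  ∑ i, C (a i) * X i

theorem coeff_single_one_linearForm (a : σ → R) (j : σ) :
    coeff (Finsupp.single j 1) (linearForm a) = a j := by
  classical
  simp [linearForm, coeff_sum, coeff_C_mul, coeff_X, Finsupp.single_left_inj one_ne_zero]

theorem linearForm_injective : Function.Injective (linearForm : (σ → R) → MvPolynomial σ R) :=
  fun a b h ↦ _root_.funext fun j ↦ by
    rw [← coeff_single_one_linearForm a, h, coeff_single_one_linearForm]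

theorem map_linearForm (f : R →+* S) (a : σ → R) :
    map f (linearForm a) = linearForm (f ∘ a) := by
  simp [linearForm]

end MvPolynomial

open MvPolynomial (linearForm)

theorem X_sub_C_linearForm_comp_dvd_map {K N L σ : Type*} [CommSemiring K] [CommRing N]
    [CommRing L] [Algebra K N] [Algebra K L] [Fintype σ] (ψ : N →ₐ[K] L) {a : σ → N}
    {F : (MvPolynomial σ K)[X]}
    (h : X - C (linearForm a) ∣ F.map (MvPolynomial.map (algebraMap K N))) :
    X - C (linearForm (ψ ∘ a)) ∣ F.map (MvPolynomial.map (algebraMap K L)) := by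
  have hcomp : (MvPolynomial.map (ψ : N →+* L)).comp (MvPolynomial.map (algebraMap K N)) =
      MvPolynomial.map (σ := σ) (algebraMap K L) := by
    ext <;> simp
  simpa [Polynomial.map_map, hcomp, MvPolynomial.map_linearForm]
    using Polynomial.map_dvd (MvPolynomial.map (ψ : N →+* L)) h

theorem Normal.of_adjoin_range_eq_top {K N F L : Type*} [Field K] [Field N] [Field F] [Field L]
    [Algebra K N] [Algebra K F] [Algebra K L] [Algebra N L] [Algebra F L]
    [IsScalarTower K N L] [IsScalarTower K F L] [Normal K N]
    (h : IntermediateField.adjoin F (Set.range (algebraMap N L)) = ⊤) : Normal F L := by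
  have hgen : ∀ x ∈ Set.range (algebraMap N L),
      IsIntegral F x ∧ ((minpoly F x).map (algebraMap F L)).Splits := by
    rintro _ ⟨y, rfl⟩
    have hy : IsIntegral K y := Normal.isIntegral inferInstance y
    refine ⟨(hy.map (IsScalarTower.toAlgHom K N L)).tower_top, ?_⟩
    have hsplit : ((minpoly K y).map (algebraMap K L)).Splits := by
      rw [IsScalarTower.algebraMap_eq K N L, ← Polynomial.map_map]
      exact (Normal.splits inferInstance y).map _
    refine hsplit.of_dvd ?_ ?_
    · exact Polynomial.map_ne_zero (minpoly.ne_zero hy)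
    · rw [IsScalarTower.algebraMap_eq K F L, ← Polynomial.map_map]
      exact Polynomial.map_dvd _ (minpoly.dvd_map_of_isScalarTower' K F L y)
  have hmem : ∀ x : L, x ∈ IntermediateField.adjoin F (Set.range (algebraMap N L)) :=
    fun x ↦ h ▸ IntermediateField.mem_top
  have := IntermediateField.isAlgebraic_adjoin fun x hx ↦ (hgen x hx).1
  have : Algebra.IsAlgebraic F L :=
    ⟨fun x ↦ IntermediateField.isAlgebraic_iff (x := ⟨x, hmem x⟩) |>.mp
      (Algebra.IsAlgebraic.isAlgebraic _)⟩
  exact ⟨fun x ↦ IntermediateField.splits_of_mem_adjoin F L hgen (hmem x)⟩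

section FractionField

attribute [local instance] MvPolynomial.algebraMvPolynomial FractionRing.liftAlgebra

variable {K N σ : Type*} [Field K] [Field N] [Algebra K N]

theorem algebraMap_fractionRing_C (y : N) :
    algebraMap (MvPolynomial σ N) (FractionRing (MvPolynomial σ N)) (MvPolynomial.C y) =
      algebraMap N _ y := by
  rw [IsScalarTower.algebraMap_apply N (MvPolynomial σ N), MvPolynomial.algebraMap_eq]

theorem algebraMap_fractionRing_X (i : σ) :
    algebraMap (MvPolynomial σ N) (FractionRing (MvPolynomial σ N)) (MvPolynomial.X i) =
      algebraMap (FractionRing (MvPolynomial σ K)) _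
        (algebraMap (MvPolynomial σ K) _ (MvPolynomial.X i)) := by
  rw [← IsScalarTower.algebraMap_apply, IsScalarTower.algebraMap_apply
    (MvPolynomial σ K) (MvPolynomial σ N), MvPolynomial.algebraMap_def, MvPolynomial.map_X]

theorem adjoin_range_algebraMap_fractionRing_mvPolynomial_eq_top :
    IntermediateField.adjoin (FractionRing (MvPolynomial σ K))
      (Set.range (algebraMap N (FractionRing (MvPolynomial σ N)))) = ⊤ := by
  set T := IntermediateField.adjoin (FractionRing (MvPolynomial σ K))
      (Set.range (algebraMap N (FractionRing (MvPolynomial σ N))))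
  have hS : ∀ p : MvPolynomial σ N, algebraMap _ (FractionRing (MvPolynomial σ N)) p ∈ T := by
    intro p
    induction p using MvPolynomial.induction_on with
    | C y =>
      rw [algebraMap_fractionRing_C]
      exact IntermediateField.subset_adjoin _ _ ⟨y, rfl⟩
    | add p q hp hq => rw [map_add]; exact T.add_mem hp hq
    | mul_X p i hp =>
      rw [map_mul, algebraMap_fractionRing_X (K := K)]
      exact T.mul_mem hp (T.algebraMap_mem _)
  rw [eq_top_iff]
  rintro z -
  obtain ⟨x, y, -, rfl⟩ := IsFractionRing.div_surjective (A := MvPolynomial σ N) z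
  exact T.div_mem (hS x) (hS y)

theorem algEquiv_apply_algebraMap_mvPolynomial [Normal K N]
    (φ : FractionRing (MvPolynomial σ N) ≃ₐ[FractionRing (MvPolynomial σ K)]
      FractionRing (MvPolynomial σ N)) (p : MvPolynomial σ N) :
    φ (algebraMap _ _ p) = algebraMap _ _
      (MvPolynomial.map ((φ.restrictScalars K).restrictNormal N : N →+* N) p) := by
  suffices h : φ.toRingHom.comp (algebraMap _ _) =
      (algebraMap _ (FractionRing (MvPolynomial σ N))).comp
        (MvPolynomial.map ((φ.restrictScalars K).restrictNormal N : N →+* N)) from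
    RingHom.congr_fun h p
  apply MvPolynomial.ringHom_ext
  · intro y
    simp only [RingHom.comp_apply, MvPolynomial.map_C, algebraMap_fractionRing_C]
    exact ((φ.restrictScalars K).restrictNormal_commutes N y).symm
  · intro i
    rw [RingHom.comp_apply, RingHom.comp_apply, MvPolynomial.map_X,
      algebraMap_fractionRing_X (K := K)]
    exact φ.commutes _

theorem exists_algEquiv_comp_eq_of_linearForm_dvd [Fintype σ] [Normal K N]
    {F : (MvPolynomial σ K)[X]} (hF : Irreducible F) {a b : σ → N}
    (ha : X - C (linearForm a) ∣ F.map (MvPolynomial.map (algebraMap K N)))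
    (hb : X - C (linearForm b) ∣ F.map (MvPolynomial.map (algebraMap K N))) :
    ∃ ψ : N ≃ₐ[K] N, ψ ∘ a = b := by
  have hinj : Function.Injective (MvPolynomial.map (σ := σ) (algebraMap K N)) :=
    MvPolynomial.map_injective _ (algebraMap K N).injective
  have hdeg : F.natDegree ≠ 0 := by
    rw [← natDegree_map_eq_of_injective hinj]
    have := natDegree_le_of_dvd ha ((Polynomial.map_ne_zero_iff hinj).mpr hF.ne_zero)
    rw [natDegree_X_sub_C] at this
    omega
  have hirr : Irreducible (F.map (algebraMap _ (FractionRing (MvPolynomial σ K)))) :=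
    (hF.isPrimitive hdeg).irreducible_iff_irreducible_map_fraction_map.mp hF
  have hroot : ∀ c, X - C (linearForm c) ∣ F.map (MvPolynomial.map (algebraMap K N)) →
      aeval (algebraMap _ (FractionRing (MvPolynomial σ N)) (linearForm c))
        (F.map (algebraMap _ (FractionRing (MvPolynomial σ K)))) = 0 := by
    intro c hc
    rw [dvd_iff_isRoot, IsRoot, eval_map, ← MvPolynomial.algebraMap_def, ← aeval_def] at hc
    rw [aeval_map_algebraMap, aeval_algebraMap_apply, hc, map_zero]
  have : Normal (FractionRing (MvPolynomial σ K)) (FractionRing (MvPolynomial σ N)) :=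
    Normal.of_adjoin_range_eq_top (K := K) (N := N)
      adjoin_range_algebraMap_fractionRing_mvPolynomial_eq_top
  obtain ⟨φ, hφ⟩ := minpoly.exists_algEquiv_of_root' ⟨_, hirr.ne_zero, hroot a ha⟩ (by
    rw [← minpoly.eq_of_irreducible hirr (hroot a ha), map_mul, hroot b hb, zero_mul])
  refine ⟨(φ.restrictScalars K).restrictNormal N, MvPolynomial.linearForm_injective ?_⟩
  apply IsFractionRing.injective (MvPolynomial σ N) (FractionRing (MvPolynomial σ N))
  rw [← hφ, algEquiv_apply_algebraMap_mvPolynomial, MvPolynomial.map_linearForm]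
  rfl

end FractionField

theorem stmt5_general (K N : Type) [Field K] [Field N] [Algebra K N] (n : ℕ)
    (f : K[X]) [IsSplittingField K N f] (α : Fin n → N)
    (F₁ : Polynomial (MvPolynomial (Fin n) K)) (hF₁ : Irreducible F₁)
    (hid : (X - C (∑ i, MvPolynomial.C (α i) * MvPolynomial.X i)) ∣
      F₁.map (MvPolynomial.map (algebraMap K N))) :
    ∀ τ : Equiv.Perm (Fin n),
      (∃ ψ : N ≃ₐ[K] N, ∀ i, ψ (α i) = α (τ i)) ↔
        (X - C (∑ i, MvPolynomial.C (α (τ i)) * MvPolynomial.X i)) ∣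
          F₁.map (MvPolynomial.map (algebraMap K N)) := by
  intro τ
  have : Normal K N := Normal.of_isSplittingField f
  constructor
  · rintro ⟨ψ, hψ⟩
    have h := X_sub_C_linearForm_comp_dvd_map (ψ : N →ₐ[K] N) (a := α) hid
    rwa [show ⇑(ψ : N →ₐ[K] N) ∘ α = α ∘ τ from funext hψ] at h
  · intro hτ
    obtain ⟨ψ, hψ⟩ := exists_algEquiv_comp_eq_of_linearForm_dvd hF₁ (a := α) hid hτ
    exact ⟨ψ, congrFun hψ⟩

/-- Van der Waerden's resolvent characterization: let `F(z,u) = ∏_{σ∈Sₙ}(z − Σ α_{σ(i)} uᵢ)`,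
a polynomial `F₀` over `K[u]`, and `F₁` an irreducible factor of `F₀` over `K[u]` divisible
(over `N`) by `z − Σ αᵢ uᵢ`. Then `τ ∈ Sₙ` lies in the Galois group of `f` over `K` (acting
on the indexed roots) iff `z − Σ α_{τ(i)} uᵢ` divides `F₁` over `N`. -/
theorem stmt5 (K N : Type) [Field K] [Field N] [Algebra K N] (n : ℕ)
    (f : K[X]) (hm : f.Monic) (hsep : f.Separable)
    [IsSplittingField K N f] (α : Fin n → N) (hinj : Function.Injective α)
    (hroots : f.map (algebraMap K N) = ∏ i, (X - C (α i)))
    (F₀ F₁ : Polynomial (MvPolynomial (Fin n) K))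
    (hF₀ : F₀.map (MvPolynomial.map (algebraMap K N)) =
      ∏ σ : Equiv.Perm (Fin n),
        (X - C (∑ i, MvPolynomial.C (α (σ i)) * MvPolynomial.X i)))
    (hF₁ : Irreducible F₁) (hdvd : F₁ ∣ F₀)
    (hid : (X - C (∑ i, MvPolynomial.C (α i) * MvPolynomial.X i)) ∣
      F₁.map (MvPolynomial.map (algebraMap K N))) :
    ∀ τ : Equiv.Perm (Fin n),
      (∃ ψ : N ≃ₐ[K] N, ∀ i, ψ (α i) = α (τ i)) ↔
        (X - C (∑ i, MvPolynomial.C (α (τ i)) * MvPolynomial.X i)) ∣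
          F₁.map (MvPolynomial.map (algebraMap K N)) :=
  stmt5_general K N n f α F₁ hF₁ hid
end

section
/- Let K be any field. The generic monic polynomial f = x^n + v_{n−1} x^{n−1} + ⋯ + v_0 over K(v_0, …, v_{n−1}) is separable, i.e., it has n distinct roots in an algebraic closure of K(v_0, …, v_{n−1}). -/
/-!
Over a field, a monic polynomial is separable iff its discriminant is nonzero, and the
discriminant of a monic polynomial commutes with every ring homomorphism. Specializing the
coefficients `v` to those of `∏ (x - aᵢ)` with distinct `aᵢ` in an algebraic closure of `K`
sends the discriminant of the generic polynomial to a nonzero element, so that discriminant is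
nonzero in `K[v]`, hence in `K(v)`.
-/

open Polynomial

namespace Polynomial

variable {R : Type*} [CommRing R]

theorem Monic.resultant_derivative_eq_neg_one_pow_mul_discr {f : R[X]} (hf : f.Monic)
    (hdeg : f.natDegree ≠ 0) :
    f.resultant (derivative f) f.natDegree (f.natDegree - 1) =
      (-1) ^ (f.natDegree * (f.natDegree - 1) / 2) * f.discr := by
  rw [resultant_deriv (natDegree_pos_iff_degree_pos.mp (Nat.pos_of_ne_zero hdeg)),
    hf.leadingCoeff, mul_one]

theorem Monic.discr_map {S : Type*} [CommRing S] [Nontrivial S] {f : R[X]} (hf : f.Monic)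
    (φ : R →+* S) : (f.map φ).discr = φ f.discr := by
  obtain hdeg | hdeg := eq_or_ne f.natDegree 0
  · rw [eq_one_of_monic_natDegree_zero hf hdeg, Polynomial.map_one, ← C_1, ← C_1, discr_C,
      discr_C, map_one]
  have hmap : (f.map φ).resultant (derivative (f.map φ)) (f.map φ).natDegree
      ((f.map φ).natDegree - 1) =
        φ (f.resultant (derivative f) f.natDegree (f.natDegree - 1)) := by
    rw [derivative_map, hf.natDegree_map, resultant_map_map]
  rw [(hf.map φ).resultant_derivative_eq_neg_one_pow_mul_discr (by rwa [hf.natDegree_map]),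
    hf.resultant_derivative_eq_neg_one_pow_mul_discr hdeg, map_mul, map_pow, map_neg, map_one,
    hf.natDegree_map] at hmap
  exact ((isUnit_neg_one (α := S)).pow _).mul_right_inj.mp hmap

theorem Monic.separable_iff_discr_ne_zero {L : Type*} [Field L] {f : L[X]} (hf : f.Monic) :
    f.Separable ↔ f.discr ≠ 0 := by
  obtain hdeg | hdeg := eq_or_ne f.natDegree 0
  · rw [eq_one_of_monic_natDegree_zero hf hdeg, ← C_1, discr_C]
    simp
  have hres := hf.resultant_derivative_eq_neg_one_pow_mul_discr hdeg
  have hsign : ((-1) ^ (f.natDegree * (f.natDegree - 1) / 2) : L) ≠ 0 := by simp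
  rw [← mul_ne_zero_iff_left hsign, ← hres]
  have hderiv := natDegree_derivative_le f
  constructor
  · intro hsep
    obtain ⟨k, hk⟩ := Nat.exists_eq_add_of_le hderiv
    rw [hk, resultant_add_right_deg _ _ _ _ _ le_rfl, hf.coeff_natDegree, one_pow, one_mul]
    exact resultant_ne_zero _ _ hsep
  · intro hres
    obtain ⟨p, q, -, -, hpq⟩ := exists_mul_add_mul_eq_C_resultant f (derivative f) le_rfl hderiv
      (Or.inl hdeg)
    refine ⟨C (f.resultant (derivative f) f.natDegree (f.natDegree - 1))⁻¹ * p,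
      C (f.resultant (derivative f) f.natDegree (f.natDegree - 1))⁻¹ * q, ?_⟩
    rw [mul_assoc, mul_assoc, ← mul_add, mul_comm p, mul_comm q, hpq, ← C_mul,
      inv_mul_cancel₀ hres, C_1]

theorem Monic.separable_map_of_separable_map {L L' : Type*} [Field L] [Field L']
    {f : R[X]} (hf : f.Monic) (φ : R →+* L) {ψ : R →+* L'} (hψ : Function.Injective ψ)
    (h : (f.map φ).Separable) : (f.map ψ).Separable := by
  rw [(hf.map φ).separable_iff_discr_ne_zero, hf.discr_map] at h
  rw [(hf.map ψ).separable_iff_discr_ne_zero, hf.discr_map]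
  exact (map_ne_zero_iff ψ hψ).mpr fun h0 ↦ h (by rw [h0, map_zero])

theorem separable_map_freeMonic (K : Type*) [Field K] (n : ℕ) {L : Type*} [Field L]
    {ψ : MvPolynomial (Fin n) K →+* L} (hψ : Function.Injective ψ) :
    ((freeMonic K n).map ψ).Separable := by
  obtain ⟨a, ha⟩ : ∃ a : Fin n → AlgebraicClosure K, Function.Injective a :=
    ⟨_, (Fin.valEmbedding.trans (Infinite.natEmbedding _)).injective⟩
  obtain ⟨φ, hφ⟩ := (MvPolynomial.mapEquivMonic K _ n).surjective
    (.mk (∏ i, (X - C (a i))) (monic_prod_X_sub_C _ _)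
      (by simp [natDegree_finsetProd_X_sub_C_eq_card]))
  have hspec : (freeMonic K n).map φ.toRingHom = ∏ i, (X - C (a i)) := congrArg Subtype.val hφ
  refine (monic_freeMonic K n).separable_map_of_separable_map φ.toRingHom hψ ?_
  rw [hspec]
  exact separable_prod_X_sub_C_iff.mpr ha

end Polynomial

/-- The generic monic polynomial `f = xⁿ + v_{n−1} x^{n−1} + ⋯ + v₀` over
`K(v₀, …, v_{n−1})` is separable, i.e. it has `n` distinct roots in an algebraic
closure. -/
theorem stmt9 (K : Type) [Field K] (n : ℕ) :
    (X ^ n + ∑ i : Fin n,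
        C (algebraMap (MvPolynomial (Fin n) K) (FractionRing (MvPolynomial (Fin n) K))
          (MvPolynomial.X i)) * X ^ (i : ℕ) :
        (FractionRing (MvPolynomial (Fin n) K))[X]).Separable ∧
    Multiset.card ((X ^ n + ∑ i : Fin n,
        C (algebraMap (MvPolynomial (Fin n) K) (FractionRing (MvPolynomial (Fin n) K))
          (MvPolynomial.X i)) * X ^ (i : ℕ) :
        (FractionRing (MvPolynomial (Fin n) K))[X]).aroots
        (AlgebraicClosure (FractionRing (MvPolynomial (Fin n) K)))) = n ∧
    ((X ^ n + ∑ i : Fin n,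
        C (algebraMap (MvPolynomial (Fin n) K) (FractionRing (MvPolynomial (Fin n) K))
          (MvPolynomial.X i)) * X ^ (i : ℕ) :
        (FractionRing (MvPolynomial (Fin n) K))[X]).aroots
        (AlgebraicClosure (FractionRing (MvPolynomial (Fin n) K)))).Nodup := by
  have hf : (X ^ n + ∑ i : Fin n,
        C (algebraMap (MvPolynomial (Fin n) K) (FractionRing (MvPolynomial (Fin n) K))
          (MvPolynomial.X i)) * X ^ (i : ℕ) : (FractionRing (MvPolynomial (Fin n) K))[X]) =
      (freeMonic K n).map (algebraMap _ _) := by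
    simp [freeMonic, Polynomial.map_sum]
  rw [hf]
  have hsep := separable_map_freeMonic K n
    (IsFractionRing.injective (MvPolynomial (Fin n) K) (FractionRing (MvPolynomial (Fin n) K)))
  refine ⟨hsep, ?_, nodup_roots hsep.map⟩
  rw [aroots_def, IsAlgClosed.card_roots_map_eq_natDegree_from_simpleRing,
    (monic_freeMonic K n).natDegree_map, natDegree_freeMonic]
end

section
/- Let K be a field and let w_1, …, w_n be algebraically independent indeterminates over K. Then x^n + e_{n−1} x^{n−1} + ⋯ + e_0 = ∏_{i=1}^n (x − w_i), where e_i = ±(the (n−i)-th elementary symmetric polynomial in w_1, …, w_n), and the Galois group of K(w_1, …, w_n) over K(e_0, …, e_{n−1}) is the full symmetric group S_n. -/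
/-!
The identity is Vieta's formula in `K[w₁, …, wₙ]`, pushed to the fraction field. Renaming the
variables gives an action of `Sₙ` on `K(w)` by automorphisms fixing the symmetric functions `eᵢ`,
hence fixing `K(e)`. Conversely, an automorphism over `K(e)` fixes the coefficients of
`∏ᵢ (X - wᵢ)`, so it permutes the distinct roots `wᵢ`, and it is determined by that permutation
because the `wᵢ` generate `K(w)` over `K`.
-/

open Polynomial

theorem MvPolynomial.prod_X_sub_C_X_eq_X_pow_add_sum_esymm (R : Type*) [CommRing R]
    [Nontrivial R] (n : ℕ) :
    ∏ i : Fin n, (Polynomial.X - Polynomial.C (X i : MvPolynomial (Fin n) R)) =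
      Polynomial.X ^ n + ∑ i : Fin n, Polynomial.C ((-1) ^ (n - (i : ℕ)) *
        esymm (Fin n) R (n - (i : ℕ))) * Polynomial.X ^ (i : ℕ) := by
  have hmonic :
      (∏ i : Fin n, (Polynomial.X - Polynomial.C (X i : MvPolynomial (Fin n) R))).Monic :=
    monic_prod_of_monic _ _ fun i _ => monic_X_sub_C _
  conv_lhs => rw [hmonic.as_sum]
  rw [natDegree_finsetProd_X_sub_C_eq_card, Finset.card_univ, Fintype.card_fin,
    ← Fin.sum_univ_eq_sum_range]
  congr! with i
  have hcoeff := Multiset.prod_X_sub_C_coeff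
    (Finset.univ.val.map (X : Fin n → MvPolynomial (Fin n) R)) (k := i) (by simp [i.is_lt.le])
  rw [Multiset.map_map, Multiset.card_map, Finset.card_val, Finset.card_univ, Fintype.card_fin]
    at hcoeff
  rwa [esymm_eq_multiset_esymm]

section RootPermutation

variable {F L ι : Type*} [Field F] [Field L] [Algebra F L] [Fintype ι] {w : ι → L}

theorem AlgHomClass.exists_apply_eq_of_prod_X_sub_C_mem_lifts {G : Type*} [FunLike G L L]
    [AlgHomClass G F L L] (hlifts : ∏ i, (X - C (w i)) ∈ lifts (algebraMap F L)) (ψ : G)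
    (i : ι) : ∃ j, ψ (w i) = w j := by
  obtain ⟨p, hp⟩ := (mem_lifts _).mp hlifts
  have haeval : ∀ x, aeval x p = ∏ j, (x - w j) := fun x => by
    rw [aeval_def, ← eval_map, hp, eval_prod]
    simp
  have hroot : ∏ j, (ψ (w i) - w j) = 0 := by
    rw [← haeval, aeval_algHom_apply, haeval,
      Finset.prod_eq_zero (Finset.mem_univ i) (sub_self _), map_zero]
  obtain ⟨j, -, hj⟩ := Finset.prod_eq_zero_iff.mp hroot
  exact ⟨j, sub_eq_zero.mp hj⟩

theorem AlgEquiv.exists_perm_apply_eq_of_prod_X_sub_C_mem_lifts (hw : Function.Injective w)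
    (hlifts : ∏ i, (X - C (w i)) ∈ lifts (algebraMap F L)) (ψ : L ≃ₐ[F] L) :
    ∃ τ : Equiv.Perm ι, ∀ i, ψ (w i) = w (τ i) := by
  choose u hu using fun i => AlgHomClass.exists_apply_eq_of_prod_X_sub_C_mem_lifts hlifts ψ i
  have hu_inj : Function.Injective u := fun a b hab => hw (ψ.injective (by rw [hu, hu, hab]))
  exact ⟨Equiv.ofBijective u hu_inj.bijective_of_finite, hu⟩

theorem exists_mulEquiv_perm_of_prod_X_sub_C_mem_lifts (hw : Function.Injective w)
    (hlifts : ∏ i, (X - C (w i)) ∈ lifts (algebraMap F L))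
    (ρ : Equiv.Perm ι →* (L ≃ₐ[F] L)) (hρ : ∀ τ i, ρ τ (w i) = w (τ i))
    (hext : ∀ ψ χ : L ≃ₐ[F] L, (∀ i, ψ (w i) = χ (w i)) → ψ = χ) :
    ∃ φ : (L ≃ₐ[F] L) ≃* Equiv.Perm ι, ∀ ψ i, ψ (w i) = w (φ ψ i) := by
  have hρ_bij : Function.Bijective ρ := by
    refine ⟨fun τ τ' h => Equiv.ext fun i => hw ?_, fun ψ => ?_⟩
    · rw [← hρ, ← hρ, h]
    · obtain ⟨τ, hτ⟩ := ψ.exists_perm_apply_eq_of_prod_X_sub_C_mem_lifts hw hlifts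
      exact ⟨τ, hext _ _ fun i => by rw [hρ, hτ]⟩
  refine ⟨(MulEquiv.ofBijective ρ hρ_bij).symm, fun ψ i => ?_⟩
  conv_lhs => rw [← (MulEquiv.ofBijective ρ hρ_bij).apply_symm_apply ψ]
  exact hρ _ i

end RootPermutation

section FixedField

variable {G K L : Type*} [Group G] [Field K] [Field L] [Algebra K L]
  (ρ : G →* (L ≃ₐ[K] L)) {F : IntermediateField K L}

noncomputable def MonoidHom.toGalOfLeFixedField
    (hF : F ≤ IntermediateField.fixedField ρ.range) : G →* (L ≃ₐ[F] L) :=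
  (IntermediateField.fixingSubgroupEquiv F).toMonoidHom.comp
    (ρ.codRestrict _ fun g => (IntermediateField.le_iff_le _ _).mp hF ⟨g, rfl⟩)

theorem MonoidHom.toGalOfLeFixedField_apply (hF : F ≤ IntermediateField.fixedField ρ.range)
    (g : G) (x : L) : ρ.toGalOfLeFixedField hF g x = ρ g x :=
  rfl

end FixedField

namespace MvPolynomial

noncomputable def renameEquivHom (R σ : Type*) [CommSemiring R] :
    Equiv.Perm σ →* (MvPolynomial σ R ≃ₐ[R] MvPolynomial σ R) where
  toFun τ := renameEquiv R τ
  map_one' := renameEquiv_refl R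
  map_mul' τ τ' := (renameEquiv_trans R τ' τ).symm

variable (K σ : Type*) [Field K]

noncomputable def permFractionRing :
    Equiv.Perm σ →* (FractionRing (MvPolynomial σ K) ≃ₐ[K] FractionRing (MvPolynomial σ K)) :=
  (IsFractionRing.fieldEquivOfAlgEquivHom K _).comp (renameEquivHom K σ)

variable {K σ}

theorem permFractionRing_algebraMap (τ : Equiv.Perm σ) (p : MvPolynomial σ K) :
    permFractionRing K σ τ (algebraMap _ _ p) = algebraMap _ _ (rename τ p) :=
  IsFractionRing.fieldEquivOfAlgEquiv_algebraMap _ _ _ _ p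

theorem adjoin_range_le_fixedField_permFractionRing {ι : Type*} {f : ι → MvPolynomial σ K}
    (hf : ∀ i, (f i).IsSymmetric) :
    IntermediateField.adjoin K (Set.range fun i => algebraMap _ _ (f i)) ≤
      IntermediateField.fixedField (permFractionRing K σ).range := by
  rw [IntermediateField.adjoin_le_iff]
  rintro _ ⟨i, rfl⟩ ⟨_, τ, rfl⟩
  exact (permFractionRing_algebraMap τ (f i)).trans (congrArg _ (hf i τ))

theorem fractionRing_algHom_ext {L : Type*} [Field L] [Algebra K L]
    {f g : FractionRing (MvPolynomial σ K) →ₐ[K] L}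
    (h : ∀ i, f (algebraMap _ _ (X i : MvPolynomial σ K)) =
      g (algebraMap _ _ (X i : MvPolynomial σ K))) : f = g := by
  have hpoly : f.comp (IsScalarTower.toAlgHom K _ _) = g.comp (IsScalarTower.toAlgHom K _ _) :=
    algHom_ext h
  exact AlgHom.coe_ringHom_injective
    (IsFractionRing.ringHom_ext (A := MvPolynomial σ K) fun p => AlgHom.congr_fun hpoly p)

end MvPolynomial

/-- With algebraically independent `w₁, …, wₙ` over `K` and
`eᵢ = (−1)^{n−i} σ_{n−i}(w₁,…,wₙ)`, we have
`xⁿ + e_{n−1} x^{n−1} + ⋯ + e₀ = ∏ᵢ (x − wᵢ)`, and the Galois group of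
`K(w₁,…,wₙ)` over `K(e₀,…,e_{n−1})` is the full symmetric group `Sₙ`
(acting by permuting the `wᵢ`). -/
theorem stmt11 (K : Type) [Field K] (n : ℕ) :
    ∀ w e : Fin n → FractionRing (MvPolynomial (Fin n) K),
    (w = fun i : Fin n => algebraMap (MvPolynomial (Fin n) K)
        (FractionRing (MvPolynomial (Fin n) K)) (MvPolynomial.X i)) →
    (e = fun i : Fin n => algebraMap (MvPolynomial (Fin n) K)
        (FractionRing (MvPolynomial (Fin n) K))
        ((-1) ^ (n - (i : ℕ)) * MvPolynomial.esymm (Fin n) K (n - (i : ℕ)))) →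
    ((X ^ n + ∑ i : Fin n, C (e i) * X ^ (i : ℕ) :
        (FractionRing (MvPolynomial (Fin n) K))[X]) = ∏ i, (X - C (w i))) ∧
    ∃ φ : (FractionRing (MvPolynomial (Fin n) K)
            ≃ₐ[IntermediateField.adjoin K (Set.range e)]
          FractionRing (MvPolynomial (Fin n) K)) ≃* Equiv.Perm (Fin n),
      ∀ ψ i, ψ (w i) = w (φ ψ i) := by
  intro w e hw he
  have hvieta : (X ^ n + ∑ i : Fin n, C (e i) * X ^ (i : ℕ) :
      (FractionRing (MvPolynomial (Fin n) K))[X]) = ∏ i, (X - C (w i)) := by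
    subst hw he
    simpa only [Polynomial.map_add, Polynomial.map_sum, Polynomial.map_prod, Polynomial.map_mul,
      Polynomial.map_sub, Polynomial.map_pow, map_X, map_C] using
      congrArg (Polynomial.map (algebraMap _ (FractionRing (MvPolynomial (Fin n) K))))
        (MvPolynomial.prod_X_sub_C_X_eq_X_pow_add_sum_esymm K n).symm
  refine ⟨hvieta, ?_⟩
  have hlifts : ∏ i, (X - C (w i)) ∈
      lifts (algebraMap (IntermediateField.adjoin K (Set.range e)) _) := by
    rw [← hvieta]
    exact add_mem (X_pow_mem_lifts _ n) (sum_mem fun i _ => mul_mem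
      (C_mem_lifts (algebraMap (IntermediateField.adjoin K (Set.range e)) _)
        ⟨e i, IntermediateField.subset_adjoin _ _ ⟨i, rfl⟩⟩) (X_pow_mem_lifts _ _))
  have hfixed : IntermediateField.adjoin K (Set.range e) ≤
      IntermediateField.fixedField (MvPolynomial.permFractionRing K (Fin n)).range := by
    subst he
    exact MvPolynomial.adjoin_range_le_fixedField_permFractionRing fun i τ => by
      rw [map_mul, map_pow, map_neg, map_one, MvPolynomial.rename_esymm]
  subst hw
  refine exists_mulEquiv_perm_of_prod_X_sub_C_mem_lifts
    ((IsFractionRing.injective _ _).comp MvPolynomial.X_injective) hlifts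
    ((MvPolynomial.permFractionRing K (Fin n)).toGalOfLeFixedField hfixed) (fun τ i => ?_)
    (fun ψ χ h => ?_)
  · rw [MonoidHom.toGalOfLeFixedField_apply, MvPolynomial.permFractionRing_algebraMap,
      MvPolynomial.rename_X]
  · exact AlgEquiv.restrictScalars_injective K (AlgEquiv.coe_toAlgHom_injective
      (MvPolynomial.fractionRing_algHom_ext h))
end

section
/- For any field K and any n ≥ 1, the Galois group of the generic polynomial f = x^n + v_{n−1}x^{n−1} + ⋯ + v_0 over K(v_0, …, v_{n−1}) is the full symmetric group S_n. -/
/-!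
Let `F = K(v₀, …, v_{n-1})` and `L = K(t₀, …, t_{n-1})`. The substitution `vᵢ ↦ e_{n-i}(t)` by
the elementary symmetric polynomials is injective (the `eᵢ` are algebraically independent), so it
makes `L` an extension of `F`, and by Vieta `f = ∏ᵢ (X + tᵢ)` over `L`. The image of `F` consists
of symmetric functions, so every permutation of the `tᵢ` extends to an `F`-automorphism of `L`:
every permutation of the `n` distinct roots `-tᵢ` is induced by the Galois group. Whether the
Galois group acts as the full symmetric group does not depend on the field in which `f` splits.
-/

open Polynomial

namespace Polynomial.Gal

variable {F : Type*} [Field F] (p : F[X]) (E E' : Type*) [Field E] [Algebra F E] [Field E']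
  [Algebra F E'] [Fact ((p.map (algebraMap F E)).Splits)] [Fact ((p.map (algebraMap F E')).Splits)]

theorem card_rootSet_congr : Nat.card (p.rootSet E) = Nat.card (p.rootSet E') :=
  Nat.card_congr ((rootsEquivRoots p E).symm.trans (rootsEquivRoots p E'))

theorem galActionHom_bijective_congr :
    Function.Bijective (galActionHom p E) ↔ Function.Bijective (galActionHom p E') := by
  let e := (rootsEquivRoots p E).symm.trans (rootsEquivRoots p E')
  have h : ⇑(galActionHom p E') = e.permCongr ∘ galActionHom p E := by
    ext g x
    simp [e, galActionHom, smul_def]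
  rw [h]
  exact (e.permCongr.bijective.of_comp_iff' _).symm

variable {p E} in
theorem galActionHom_surjective_of_forall_exists
    (h : ∀ π : Equiv.Perm (p.rootSet E), ∃ φ : Gal(E/F), ∀ x : p.rootSet E, φ x = π x) :
    Function.Surjective (galActionHom p E) := fun π => by
  obtain ⟨φ, hφ⟩ := h π
  exact ⟨restrict p E φ,
    Equiv.ext fun x => Subtype.ext ((galActionHom_restrict p E φ x).trans (hφ x))⟩

end Polynomial.Gal

namespace MvPolynomial

theorem prod_X_add_C_X_eq_X_pow_add_sum_esymm (R : Type*) [CommSemiring R] (n : ℕ) :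
    ∏ i : Fin n, (Polynomial.X + Polynomial.C (X i : MvPolynomial (Fin n) R)) =
      Polynomial.X ^ n +
        ∑ i : Fin n, Polynomial.C (esymm (Fin n) R (n - i)) * Polynomial.X ^ (i : ℕ) := by
  rw [prod_C_add_X_eq_sum_esymm, Fintype.card_fin, Finset.sum_range,
    ← Fintype.sum_equiv Fin.revPerm _ _ (fun _ => rfl), Fin.sum_univ_castSucc]
  simp only [Fin.revPerm_apply, Fin.val_rev, Fin.val_castSucc, Fin.val_last,
    Nat.add_sub_add_right, Nat.sub_self, esymm_zero, map_one, one_mul, Nat.sub_zero]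
  rw [add_comm]
  refine congrArg (_ + ·) (Finset.sum_congr rfl fun i _ => ?_)
  rw [Nat.sub_sub_self i.is_lt.le]

end MvPolynomial

namespace GenericPolynomial

open MvPolynomial

variable (K : Type*) [CommRing K] (n : ℕ)

local notation "R" => MvPolynomial (Fin n) K
local notation "F" => FractionRing (MvPolynomial (Fin n) K)

noncomputable def esymmSubst : R →ₐ[K] R :=
  ((symmetricSubalgebra (Fin n) K).val.comp (esymmAlgHom (Fin n) K n)).comp (rename Fin.rev)

theorem esymmSubst_injective : Function.Injective (esymmSubst K n) :=
  Subtype.val_injective.comp <| (esymmAlgHom_injective K (Fintype.card_fin n).ge |>.comp <|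
    rename_injective _ Fin.rev_injective)

theorem esymmSubst_X (i : Fin n) : esymmSubst K n (X i) = esymm (Fin n) K (n - i) := by
  simp only [esymmSubst, AlgHom.comp_apply, rename_X, Subalgebra.coe_val, esymmAlgHom_apply,
    MvPolynomial.aeval_X]
  congr 1
  rw [Fin.val_rev]
  omega

theorem rename_esymmSubst (σ : Equiv.Perm (Fin n)) (p : R) :
    rename σ (esymmSubst K n p) = esymmSubst K n p :=
  (esymmAlgHom (Fin n) K n (rename Fin.rev p)).prop σ

variable [IsDomain K]

/-- `K(t₀, …, t_{n-1})`: a copy of `FractionRing R`, so that it can carry the algebra structure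
over `F` given by `vᵢ ↦ e_{n-i}(t)` without clashing with `Algebra.id`. -/
def GenericRootField : Type _ := FractionRing R

noncomputable instance : Field (GenericRootField K n) :=
  inferInstanceAs (Field (FractionRing R))

noncomputable instance : Algebra R (GenericRootField K n) :=
  inferInstanceAs (Algebra R (FractionRing R))

instance : IsFractionRing R (GenericRootField K n) :=
  inferInstanceAs (IsFractionRing R (FractionRing R))

local notation "L" => GenericRootField K n

theorem algebraMap_comp_esymmSubst_injective :
    Function.Injective ((algebraMap R L).comp (esymmSubst K n).toRingHom) :=
  (IsFractionRing.injective R L).comp (esymmSubst_injective K n)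

noncomputable instance : Algebra F L :=
  (IsFractionRing.lift (algebraMap_comp_esymmSubst_injective K n)).toAlgebra

theorem algebraMap_algebraMap (p : R) :
    algebraMap F L (algebraMap R F p) = algebraMap R L (esymmSubst K n p) :=
  IsFractionRing.lift_algebraMap _ p

noncomputable def genericRoot (i : Fin n) : L := -algebraMap R L (X i)

theorem genericRoot_injective : Function.Injective (genericRoot K n) := fun _ _ h =>
  X_injective (IsFractionRing.injective R L (neg_injective h))

noncomputable def genericPoly : F[X] :=
  Polynomial.X ^ n + ∑ i : Fin n, Polynomial.C (algebraMap R F (X i)) * Polynomial.X ^ (i : ℕ)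

theorem map_genericPoly :
    (genericPoly K n).map (algebraMap F L) =
      ∏ i : Fin n, (Polynomial.X - Polynomial.C (genericRoot K n i)) := by
  have := congrArg (Polynomial.map (algebraMap R L)) (prod_X_add_C_X_eq_X_pow_add_sum_esymm K n)
  simp only [Polynomial.map_prod, Polynomial.map_add, Polynomial.map_pow, Polynomial.map_X,
    Polynomial.map_sum, Polynomial.map_mul, Polynomial.map_C] at this
  simp only [genericPoly, genericRoot, Polynomial.map_add, Polynomial.map_pow, Polynomial.map_X,
    Polynomial.map_sum, Polynomial.map_mul, Polynomial.map_C, algebraMap_algebraMap, esymmSubst_X,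
    map_neg, sub_neg_eq_add, this]

theorem rootSet_genericPoly : (genericPoly K n).rootSet L = Set.range (genericRoot K n) := by
  ext x
  rw [mem_rootSet', Polynomial.aeval_def, Polynomial.eval₂_eq_eval_map, map_genericPoly,
    Polynomial.eval_prod, Finset.prod_eq_zero_iff]
  simp [(monic_prod_of_monic _ _ fun i _ => monic_X_sub_C (genericRoot K n i)).ne_zero,
    sub_eq_zero, eq_comm]

theorem splits_genericPoly : ((genericPoly K n).map (algebraMap F L)).Splits := by
  rw [map_genericPoly]
  exact Splits.prod fun i _ => Splits.X_sub_C _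

noncomputable def permAlgEquiv (σ : Equiv.Perm (Fin n)) : L ≃ₐ[F] L :=
  AlgEquiv.ofRingEquiv (f := IsFractionRing.ringEquivOfRingEquiv (renameEquiv K σ).toRingEquiv)
    fun x => by
      obtain ⟨p, q, -, rfl⟩ := IsFractionRing.div_surjective (A := R) x
      simp [map_div₀, algebraMap_algebraMap, rename_esymmSubst]

theorem permAlgEquiv_genericRoot (σ : Equiv.Perm (Fin n)) (i : Fin n) :
    permAlgEquiv K n σ (genericRoot K n i) = genericRoot K n (σ i) := by
  simp [permAlgEquiv, genericRoot]

instance : Fact (((genericPoly K n).map (algebraMap F L)).Splits) := ⟨splits_genericPoly K n⟩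

noncomputable def rootsEquiv : Fin n ≃ (genericPoly K n).rootSet L :=
  (Equiv.ofInjective _ (genericRoot_injective K n)).trans
    (Equiv.setCongr (rootSet_genericPoly K n).symm)

theorem coe_rootsEquiv (i : Fin n) : (rootsEquiv K n i : L) = genericRoot K n i := rfl

theorem galActionHom_genericPoly_bijective :
    Function.Bijective (Gal.galActionHom (genericPoly K n) L) := by
  refine ⟨Gal.galActionHom_injective _ _, Gal.galActionHom_surjective_of_forall_exists fun π => ?_⟩
  let e := rootsEquiv K n
  refine ⟨permAlgEquiv K n (e.symm.permCongr π), fun x => ?_⟩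
  obtain ⟨i, rfl⟩ := e.surjective x
  rw [coe_rootsEquiv, permAlgEquiv_genericRoot, ← coe_rootsEquiv, Equiv.permCongr_apply,
    Equiv.symm_symm, Equiv.apply_symm_apply]

end GenericPolynomial

open GenericPolynomial

theorem stmt12_general (K : Type) [Field K] (n : ℕ) :
    ∀ f : (FractionRing (MvPolynomial (Fin n) K))[X],
      f = X ^ n + ∑ i : Fin n,
        C (algebraMap (MvPolynomial (Fin n) K) (FractionRing (MvPolynomial (Fin n) K))
          (MvPolynomial.X i)) * X ^ (i : ℕ) →
      haveI : Fact ((f.map (algebraMap (FractionRing (MvPolynomial (Fin n) K))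
          f.SplittingField)).Splits) := ⟨SplittingField.splits f⟩
      Nat.card (f.rootSet f.SplittingField) = n ∧
      Function.Bijective (Polynomial.Gal.galActionHom f f.SplittingField) := by
  intro f hf
  obtain rfl : f = genericPoly K n := hf
  have : Fact (((genericPoly K n).map (algebraMap _ (genericPoly K n).SplittingField)).Splits) :=
    ⟨SplittingField.splits _⟩
  refine ⟨?_, (Gal.galActionHom_bijective_congr _ _ (GenericRootField K n)).2
    (galActionHom_genericPoly_bijective K n)⟩
  rw [Gal.card_rootSet_congr _ _ (GenericRootField K n), ← Nat.card_congr (rootsEquiv K n),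
    Nat.card_eq_fintype_card, Fintype.card_fin]

/-- For any field `K` and `n ≥ 1`, the Galois group of the generic polynomial
`f = xⁿ + v_{n−1}x^{n−1} + ⋯ + v₀` over `K(v₀,…,v_{n−1})`, viewed as a permutation
group on the `n` roots of `f`, is the full symmetric group `Sₙ`. -/
theorem stmt12 (K : Type) [Field K] (n : ℕ) (hn : 1 ≤ n) :
    ∀ f : (FractionRing (MvPolynomial (Fin n) K))[X],
      f = X ^ n + ∑ i : Fin n,
        C (algebraMap (MvPolynomial (Fin n) K) (FractionRing (MvPolynomial (Fin n) K))
          (MvPolynomial.X i)) * X ^ (i : ℕ) →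
      haveI : Fact ((f.map (algebraMap (FractionRing (MvPolynomial (Fin n) K))
          f.SplittingField)).Splits) := ⟨SplittingField.splits f⟩
      Nat.card (f.rootSet f.SplittingField) = n ∧
      Function.Bijective (Polynomial.Gal.galActionHom f f.SplittingField) :=
  stmt12_general K n
end

section
/- Let F_q be a finite field with q elements and let n ≥ 1. The probability that a uniformly random pair (A, B), with A = Σ_{i=0}^{n−1} a_i x^i and B = x^n + Σ_{i=0}^{n−1} b_i x^i where a_i, b_i are uniform in F_q, satisfies gcd(A, B) ≠ 1, is exactly 1/q. Equivalently, the number of pairs (a_0,…,a_{n−1}, b_0,…,b_{n−1}) ∈ F_q^{2n} with gcd(A, B) ≠ 1 is exactly q^{2n−1}. -/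
/-!
A pair `(A, B)` with `A ≠ 0` of degree `d < n` and `B` monic of degree `n` is uniquely
`(c • A₀, Q * A₀ + R)` with `c` a unit, `A₀` and `Q` monic of degrees `d` and `n - d`, and
`deg R < d`, and `gcd (A, B) = gcd (R, A₀)`. Hence the number `N n` of non-coprime pairs satisfies
`N 0 = 0` and `N n = q ^ n + ∑_{d < n} (q - 1) q ^ (n - d) N d` for `n ≠ 0`, the first term
counting the pairs with `A = 0`; this recursion is solved by `N n = q ^ (2n - 1)`.
-/

open Polynomial

theorem eq_pow_two_mul_sub_one_of_rec {q : ℕ} (hq : 1 ≤ q) {N : ℕ → ℕ} (h0 : N 0 = 0)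
    (hrec : ∀ n ≠ 0, N n = q ^ n + ∑ d ∈ Finset.range n, (q - 1) * q ^ (n - d) * N d) :
    ∀ n ≠ 0, N n = q ^ (2 * n - 1) := by
  obtain ⟨r, rfl⟩ := Nat.exists_eq_add_of_le' hq
  intro n
  induction n using Nat.strong_induction_on with
  | _ n ih =>
    intro hn
    obtain ⟨m, rfl⟩ : ∃ m, n = m + 1 := Nat.exists_eq_succ_of_ne_zero hn
    have hterm : ∀ i ∈ Finset.range m, r * (r + 1) ^ (m + 1 - (i + 1)) * N (i + 1) =
        (r + 1) ^ (m + 1) * ((r + 1) ^ i * r) := by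
      intro i hi
      rw [ih (i + 1) (by grind) (by simp), mul_assoc, ← pow_add,
        show m + 1 - (i + 1) + (2 * (i + 1) - 1) = (m + 1) + i by grind]
      ring
    rw [hrec _ hn, Finset.sum_range_succ', h0, mul_zero, add_zero, Nat.add_sub_cancel,
      Finset.sum_congr rfl hterm, ← Finset.mul_sum, ← Finset.sum_mul, ← mul_one_add, add_comm 1,
      geom_sum_mul_add, ← pow_add]
    congr 1
    omega

theorem isCoprime_unit_mul_mul_add_iff {R : Type*} [CommRing R] {u a q r : R} (hu : IsUnit u) :
    IsCoprime (u * a) (q * a + r) ↔ IsCoprime r a := by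
  rw [isCoprime_mul_unit_left_left hu, IsCoprime.mul_add_right_right_iff, isCoprime_comm]

namespace Polynomial

section Semiring

variable {R : Type*} [Semiring R] [Nontrivial R] {q a r : R[X]}

theorem Monic.degree_le_degree_mul_left (hq : q.Monic) (ha : a.Monic) :
    a.degree ≤ (q * a).degree := by
  rw [ha.degree_mul]
  exact le_add_of_nonneg_left (zero_le_degree_iff.mpr hq.ne_zero)

theorem Monic.mul_add_of_degree_lt (hq : q.Monic) (ha : a.Monic) (hr : r.degree < a.degree) :
    (q * a + r).Monic :=
  (hq.mul ha).add_of_left (hr.trans_le (hq.degree_le_degree_mul_left ha))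

theorem Monic.natDegree_mul_add_of_degree_lt (hq : q.Monic) (ha : a.Monic)
    (hr : r.degree < a.degree) : (q * a + r).natDegree = q.natDegree + a.natDegree := by
  rw [natDegree_add_eq_left_of_degree_lt (hr.trans_le (hq.degree_le_degree_mul_left ha)),
    hq.natDegree_mul ha]

end Semiring

variable {F : Type*} [Field F]

variable (F) in
def monicsOfDegree (n : ℕ) : Set F[X] := {B | B.Monic ∧ B.natDegree = n}

theorem degree_eq_of_mem_monicsOfDegree {n : ℕ} {B : F[X]} (hB : B ∈ monicsOfDegree F n) :
    B.degree = n := by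
  rw [degree_eq_natDegree hB.1.ne_zero, hB.2]

noncomputable def coeffsEquivDegreeLT (n : ℕ) : (Fin n → F) ≃ degreeLT F n :=
  (degreeLT.basis F n).equivFun.symm.toEquiv

theorem coe_coeffsEquivDegreeLT (n : ℕ) (a : Fin n → F) :
    (coeffsEquivDegreeLT n a : F[X]) = ∑ i, C (a i) * X ^ (i : ℕ) := by
  simp [coeffsEquivDegreeLT, Module.Basis.equivFun_symm_apply, smul_eq_C_mul]

noncomputable def coeffsEquivMonicsOfDegree (n : ℕ) : (Fin n → F) ≃ monicsOfDegree F n :=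
  (coeffsEquivDegreeLT n).trans (monicEquivDegreeLT n).symm

theorem coe_coeffsEquivMonicsOfDegree (n : ℕ) (b : Fin n → F) :
    (coeffsEquivMonicsOfDegree n b : F[X]) = X ^ n + ∑ i, C (b i) * X ^ (i : ℕ) := by
  rw [← coe_coeffsEquivDegreeLT]
  rfl

theorem card_monicsOfDegree (n : ℕ) : Nat.card (monicsOfDegree F n) = Nat.card F ^ n := by
  rw [← Nat.card_congr (coeffsEquivMonicsOfDegree n), Nat.card_fun, Nat.card_fin]

variable (F) in
abbrev NonCoprimePairs (n : ℕ) : Type _ :=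
  {p : degreeLT F n × monicsOfDegree F n // ¬IsCoprime (p.1 : F[X]) p.2}

noncomputable def coeffsEquivNonCoprimePairs (n : ℕ) :
    {ab : (Fin n → F) × (Fin n → F) // ¬IsCoprime (∑ i, C (ab.1 i) * X ^ (i : ℕ))
      (X ^ n + ∑ i, C (ab.2 i) * X ^ (i : ℕ))} ≃ NonCoprimePairs F n :=
  ((coeffsEquivDegreeLT n).prodCongr (coeffsEquivMonicsOfDegree n)).subtypeEquiv fun ab => by
    rw [Equiv.prodCongr_apply, Prod.map, coe_coeffsEquivDegreeLT, coe_coeffsEquivMonicsOfDegree]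

theorem card_nonCoprimePairs_zero : Nat.card (NonCoprimePairs F 0) = 0 := by
  refine Nat.card_eq_zero.mpr (.inl ⟨fun ⟨⟨A, B, hB⟩, hAB⟩ => hAB ?_⟩)
  change IsCoprime (A : F[X]) B
  rw [hB.1.natDegree_eq_zero.mp hB.2]
  exact isCoprime_one_right

namespace NonCoprimePairs

variable (F) in
noncomputable def zeroPair {n : ℕ} (hn : n ≠ 0) (B : monicsOfDegree F n) : NonCoprimePairs F n :=
  ⟨(0, B), by
    rw [Submodule.coe_zero, isCoprime_zero_left, B.2.1.isUnit_iff]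
    rintro hB
    exact hn (B.2.2 ▸ hB ▸ natDegree_one)⟩

variable (F) in
abbrev EuclidData (n : ℕ) : Type _ :=
  Σ d : Fin n, Fˣ × monicsOfDegree F (n - d) × NonCoprimePairs F d

noncomputable def ofEuclidData {n : ℕ} : EuclidData F n → NonCoprimePairs F n
  | ⟨d, c, ⟨Q, hQ⟩, ⟨(⟨R, hR⟩, ⟨A, hA⟩), h⟩⟩ =>
    have hRA : R.degree < A.degree := degree_eq_of_mem_monicsOfDegree hA ▸ mem_degreeLT.mp hR
    ⟨(⟨C (c : F) * A, by
        rw [mem_degreeLT, degree_C_mul c.ne_zero, degree_eq_of_mem_monicsOfDegree hA]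
        exact_mod_cast d.isLt⟩,
      ⟨Q * A + R, hQ.1.mul_add_of_degree_lt hA.1 hRA, by
        rw [hQ.1.natDegree_mul_add_of_degree_lt hA.1 hRA, hQ.2, hA.2]
        exact Nat.sub_add_cancel d.isLt.le⟩),
      (isCoprime_unit_mul_mul_add_iff (isUnit_C.mpr c.isUnit)).not.mpr h⟩

theorem ofEuclidData_injective {n : ℕ} : Function.Injective (ofEuclidData (F := F) (n := n)) := by
  rintro ⟨d, c, ⟨Q, hQ⟩, ⟨⟨⟨R, hR⟩, ⟨A, hA⟩⟩, hRA⟩⟩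
    ⟨d', c', ⟨Q', hQ'⟩, ⟨⟨⟨R', hR'⟩, ⟨A', hA'⟩⟩, hRA'⟩⟩ h
  simp only [ofEuclidData, Subtype.ext_iff, Prod.ext_iff] at h
  obtain ⟨hA_eq, hB_eq⟩ := h
  obtain rfl : d = d' := Fin.ext <| by
    simpa [natDegree_C_mul, hA.2, hA'.2] using congrArg natDegree hA_eq
  obtain rfl : c = c' := Units.ext <| by
    simpa [hA.1.leadingCoeff, hA'.1.leadingCoeff] using congrArg leadingCoeff hA_eq
  obtain rfl : A = A' := mul_left_cancel₀ (C_ne_zero.mpr c.ne_zero) hA_eq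
  have hdiv := div_modByMonic_unique (f := Q * A + R) Q R hA.1
    ⟨by ring, degree_eq_of_mem_monicsOfDegree hA ▸ mem_degreeLT.mp hR⟩
  have hdiv' := div_modByMonic_unique (f := Q * A + R) Q' R' hA.1
    ⟨by rw [hB_eq]; ring, degree_eq_of_mem_monicsOfDegree hA ▸ mem_degreeLT.mp hR'⟩
  obtain rfl : Q = Q' := hdiv.1.symm.trans hdiv'.1
  obtain rfl : R = R' := hdiv.2.symm.trans hdiv'.2
  rfl

theorem exists_ofEuclidData_eq {n : ℕ} (p : NonCoprimePairs F n) (hp : (p.1.1 : F[X]) ≠ 0) :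
    ∃ x, ofEuclidData x = p := by
  obtain ⟨⟨⟨A, hA⟩, ⟨B, hB⟩⟩, hAB⟩ := p
  simp only at hp hAB
  have hlc : A.leadingCoeff ≠ 0 := leadingCoeff_ne_zero.mpr hp
  obtain ⟨A₀, hA₀, hA_eq⟩ :
      ∃ A₀ ∈ monicsOfDegree F A.natDegree, C A.leadingCoeff * A₀ = A :=
    ⟨A * C A.leadingCoeff⁻¹, ⟨monic_mul_leadingCoeff_inv hp, natDegree_mul_C (inv_ne_zero hlc)⟩,
      by rw [mul_left_comm, ← C_mul, mul_inv_cancel₀ hlc, C_1, mul_one]⟩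
  have hdeg : A.natDegree < n := by
    have := mem_degreeLT.mp hA
    rw [degree_eq_natDegree hp] at this
    exact_mod_cast this
  have hA₀B : A₀.degree ≤ B.degree := by
    rw [degree_eq_of_mem_monicsOfDegree hA₀, degree_eq_of_mem_monicsOfDegree hB]
    exact_mod_cast hdeg.le
  have hQ : B /ₘ A₀ ∈ monicsOfDegree F (n - A.natDegree) := by
    refine ⟨?_, by rw [natDegree_divByMonic B hA₀.1, hB.2, hA₀.2]⟩
    rw [Monic, leadingCoeff_divByMonic_of_monic hA₀.1 hA₀B, hB.1.leadingCoeff]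
  have hR : B %ₘ A₀ ∈ degreeLT F A.natDegree := by
    rw [mem_degreeLT, ← degree_eq_of_mem_monicsOfDegree hA₀]
    exact degree_modByMonic_lt B hA₀.1
  have hB_eq : B /ₘ A₀ * A₀ + B %ₘ A₀ = B := by
    rw [mul_comm, add_comm, modByMonic_add_div]
  have hRA₀ : ¬IsCoprime (B %ₘ A₀) A₀ := by
    rwa [← isCoprime_unit_mul_mul_add_iff (q := B /ₘ A₀) (isUnit_C.mpr (Units.mk0 _ hlc).isUnit),
      Units.val_mk0, hA_eq, hB_eq]
  refine ⟨⟨⟨A.natDegree, hdeg⟩, Units.mk0 _ hlc, ⟨_, hQ⟩, ⟨(⟨_, hR⟩, ⟨_, hA₀⟩), hRA₀⟩⟩, ?_⟩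
  apply Subtype.ext
  apply Prod.ext <;> apply Subtype.ext
  exacts [hA_eq, hB_eq]

theorem zeroPair_injective {n : ℕ} (hn : n ≠ 0) : Function.Injective (zeroPair F hn) :=
  fun _ _ h => Subtype.ext (congrArg (fun p : NonCoprimePairs F n => (p.1.2 : F[X])) h)

theorem zeroPair_ne_ofEuclidData {n : ℕ} (hn : n ≠ 0) (B : monicsOfDegree F n)
    (x : EuclidData F n) : zeroPair F hn B ≠ ofEuclidData x := by
  obtain ⟨d, c, Q, ⟨⟨R, A, hA⟩, h⟩⟩ := x
  intro hB
  have := congrArg (fun p : NonCoprimePairs F n => (p.1.1 : F[X])) hB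
  simp only [zeroPair, ofEuclidData, Submodule.coe_zero] at this
  exact mul_ne_zero (C_ne_zero.mpr c.ne_zero) hA.1.ne_zero this.symm

noncomputable def equivEuclidData {n : ℕ} (hn : n ≠ 0) :
    monicsOfDegree F n ⊕ EuclidData F n ≃ NonCoprimePairs F n := by
  refine .ofBijective (Sum.elim (zeroPair F hn) ofEuclidData)
    ⟨(zeroPair_injective hn).sumElim ofEuclidData_injective (zeroPair_ne_ofEuclidData hn), ?_⟩
  intro p
  by_cases hp : (p.1.1 : F[X]) = 0
  · exact ⟨.inl p.1.2, Subtype.ext (Prod.ext (Subtype.ext hp.symm) rfl)⟩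
  · obtain ⟨x, hx⟩ := exists_ofEuclidData_eq p hp
    exact ⟨.inr x, hx⟩

end NonCoprimePairs

variable [Finite F]

instance (n : ℕ) : Finite (degreeLT F n) := Module.finite_of_finite F

instance (n : ℕ) : Finite (monicsOfDegree F n) := .of_equiv _ (coeffsEquivMonicsOfDegree n)

theorem card_nonCoprimePairs_eq_sum {n : ℕ} (hn : n ≠ 0) :
    Nat.card (NonCoprimePairs F n) = Nat.card F ^ n + ∑ d ∈ Finset.range n,
      (Nat.card F - 1) * Nat.card F ^ (n - d) * Nat.card (NonCoprimePairs F d) := by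
  rw [← Nat.card_congr (NonCoprimePairs.equivEuclidData hn), Nat.card_sum, Nat.card_sigma,
    card_monicsOfDegree]
  simp only [Nat.card_prod, Nat.card_units, card_monicsOfDegree, mul_assoc]
  rw [Fin.sum_univ_eq_sum_range
    (fun d => (Nat.card F - 1) * (Nat.card F ^ (n - d) * Nat.card (NonCoprimePairs F d)))]

theorem card_nonCoprimePairs {n : ℕ} (hn : n ≠ 0) :
    Nat.card (NonCoprimePairs F n) = Nat.card F ^ (2 * n - 1) :=
  eq_pow_two_mul_sub_one_of_rec Nat.card_pos card_nonCoprimePairs_zero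
    (fun _ => card_nonCoprimePairs_eq_sum) n hn

end Polynomial

/-- For a finite field `F_q` and `n ≥ 1`, the number of pairs
`(a₀,…,a_{n−1}, b₀,…,b_{n−1}) ∈ F_q^{2n}` such that
`gcd(Σ aᵢ xⁱ, xⁿ + Σ bᵢ xⁱ) ≠ 1` is exactly `q^{2n−1}`. -/
theorem stmt13 (F : Type) [Field F] [Fintype F] (n : ℕ) (hn : 1 ≤ n) :
    Nat.card {ab : (Fin n → F) × (Fin n → F) //
      ¬ IsCoprime (∑ i, C (ab.1 i) * X ^ (i : ℕ) : F[X])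
          (X ^ n + ∑ i, C (ab.2 i) * X ^ (i : ℕ) : F[X])} =
      Fintype.card F ^ (2 * n - 1) := by
  rw [Nat.card_congr (coeffsEquivNonCoprimePairs n), card_nonCoprimePairs (Nat.one_le_iff_ne_zero.mp hn),
    Nat.card_eq_fintype_card]
end
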